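/- arXiv:1210.0405 — 5 statements merged into one kernel-verified Lean document; each statement's English description precedes it below -/
import Mathlib

section
/- If a partition n = (2^{i₁}−1) + (2^{i₂}−1) + ⋯ + (2^{i_k}−1) with i₁ > i₂ > ⋯ > i_k ≥ 1 has all exponents distinct (the gap-1 condition), then it is a minimum almost binary partition of n, i.e., τ_P(n) = k. -/
/-!
Since `2 ^ d - 1 + 1 = 2 ^ d`, an ABP of `n` with `m` parts is the same as a way of writing
`n + m` as a sum of `m` powers of two `2 ^ d` with `d ≥ 1`. Hence `n + m` is even and has binary
weight `s₂(n + m) ≤ m`, while distinct exponents give `s₂(n + k) = k`. If `m < k`, then `k - m` is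
even and subadditivity of `s₂` (Legendre's formula) yields `s₂(n + k) < k`, a contradiction.
-/

def nu (d : ℕ) : ℕ := 2 ^ d - 1

def IsABP (n : ℕ) (P : Multiset ℕ) : Prop :=
  (∀ i ∈ P, 1 ≤ i) ∧ (P.map nu).sum = n

noncomputable def tauP (n : ℕ) : ℕ :=
  sInf {k | ∃ P : Multiset ℕ, IsABP n P ∧ P.card = k}

def IsSABP (n : ℕ) (P N : Multiset ℕ) : Prop :=
  (∀ i ∈ P, 1 ≤ i) ∧ (∀ j ∈ N, 1 ≤ j) ∧
    (n : ℤ) = ((P.map nu).sum : ℤ) - ((N.map nu).sum : ℤ)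

noncomputable def tau (n : ℕ) : ℕ :=
  sInf {k | ∃ P N : Multiset ℕ, IsSABP n P N ∧ P.card + N.card = k}

noncomputable def tauC (n : ℕ) : ℕ :=
  sInf {k | ∃ (r : ℕ) (N : Multiset ℕ), IsSABP n {r} N ∧ 1 + N.card = k}

def greedy : ℕ → Multiset ℕ
  | 0 => 0
  | (n+1) => Nat.log 2 (n+2) ::ₘ greedy (n + 1 - nu (Nat.log 2 (n+2)))
  decreasing_by
    have h1 : 0 < Nat.log 2 (n+2) := Nat.log_pos one_lt_two (by omega)
    have h2 : 2 ^ 1 ≤ 2 ^ Nat.log 2 (n+2) := Nat.pow_le_pow_right (by norm_num) h1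
    simp only [nu] at *
    omega

open Classical in
noncomputable def dualf (n : ℕ) : ℕ :=
  if ∃ k : ℕ, 1 ≤ k ∧ n = 2 ^ k - 1 then n else 3 * 2 ^ Nat.log 2 n - n - 2

def parentT (v : ℕ × ℕ) : ℕ × ℕ := (v.1 + 1, v.2 / 2)

def levelT (v : ℕ × ℕ) : ℕ := v.1 + 1

def treeGraph : SimpleGraph (ℕ × ℕ) where
  Adj u v := parentT u = v ∨ parentT v = u
  symm := ⟨by intro u v h; tauto⟩
  loopless := ⟨by intro v h; simp [parentT, Prod.ext_iff] at h⟩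

noncomputable def cutCard (S : Finset (ℕ × ℕ)) : ℕ :=
  Set.ncard {v : ℕ × ℕ | ¬ ((v ∈ S) ↔ (parentT v ∈ S))}

def leafCount (S : Finset (ℕ × ℕ)) : ℕ := (S.filter (fun v => v.1 = 0)).card

def completeSubtree (v : ℕ × ℕ) : Finset (ℕ × ℕ) :=
  (Finset.range (v.1 + 1)).biUnion (fun a =>
    (Finset.Ico (v.2 * 2 ^ (v.1 - a)) ((v.2 + 1) * 2 ^ (v.1 - a))).image (fun i => (a, i)))

def Bd (d : ℕ) : Finset (ℕ × ℕ) := completeSubtree (d - 1, 0)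

def cutBd (d : ℕ) (X : Finset (ℕ × ℕ)) : ℕ :=
  ((Bd d).filter (fun v => v.1 + 1 < d ∧ ¬((v ∈ X) ↔ parentT v ∈ X))).card

noncomputable def deltaB (d i : ℕ) : ℕ :=
  sInf {c | ∃ X ⊆ Bd d, X.card = i ∧ cutBd d X = c}

noncomputable def tauC0 (n : ℕ) : ℕ := if n = 0 then 0 else tauC n

def fS (S : Finset (ℕ × ℕ)) (v : ℕ × ℕ) : ℤ :=
  if v ∈ S ∧ parentT v ∉ S then 2 ^ levelT v - 1
  else if v ∉ S ∧ parentT v ∈ S then -(2 ^ levelT v - 1)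
  else 0

def binaryWeight (n : ℕ) : ℕ := (Nat.digits 2 n).sum

theorem binaryWeight_eq_length_bitIndices (n : ℕ) : binaryWeight n = n.bitIndices.length := by
  induction n using Nat.evenOddRec with
  | h0 => simp [binaryWeight]
  | h_even n ih =>
    rcases n.eq_zero_or_pos with rfl | hn
    · simp [binaryWeight]
    rw [binaryWeight, Nat.digits_def' one_lt_two (by omega), Nat.mul_mod_right,
      Nat.mul_div_cancel_left n two_pos, Nat.bitIndices_two_mul, List.sum_cons, List.length_map,
      ← ih, binaryWeight, zero_add]
  | h_odd n ih =>
    have hdiv : (2 * n + 1) / 2 = n := by omega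
    rw [binaryWeight, Nat.digits_def' one_lt_two (by omega), hdiv, Nat.bitIndices_two_mul_add_one,
      List.sum_cons, List.length_cons, List.length_map, ← ih, binaryWeight]
    omega

theorem binaryWeight_le (n : ℕ) : binaryWeight n ≤ n := Nat.digit_sum_le 2 n

theorem binaryWeight_two_mul (n : ℕ) : binaryWeight (2 * n) = binaryWeight n := by
  simp [binaryWeight_eq_length_bitIndices]

theorem binaryWeight_two_pow (i : ℕ) : binaryWeight (2 ^ i) = 1 := by
  simp [binaryWeight_eq_length_bitIndices]

-- Legendre: `v₂(n!) = n - s₂(n)`, and `a! * b!` divides `(a + b)!`.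
theorem binaryWeight_add_le (a b : ℕ) :
    binaryWeight (a + b) ≤ binaryWeight a + binaryWeight b := by
  have : Fact (Nat.Prime 2) := ⟨Nat.prime_two⟩
  have hv (n : ℕ) : padicValNat 2 n.factorial = n - binaryWeight n := by
    simpa [binaryWeight] using sub_one_mul_padicValNat_factorial (p := 2) n
  have hdvd : padicValNat 2 (a.factorial * b.factorial) ≤ padicValNat 2 (a + b).factorial :=
    (padicValNat_dvd_iff_le (Nat.factorial_ne_zero _)).mp
      ((pow_padicValNat_dvd).trans (Nat.factorial_mul_factorial_dvd_factorial_add a b))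
  rw [padicValNat.mul (Nat.factorial_ne_zero _) (Nat.factorial_ne_zero _), hv, hv, hv] at hdvd
  have := binaryWeight_le a
  have := binaryWeight_le b
  have := binaryWeight_le (a + b)
  omega

theorem binaryWeight_add_lt_of_even {a d : ℕ} (hd : Even d) (hd0 : d ≠ 0) :
    binaryWeight (a + d) < binaryWeight a + d := by
  obtain ⟨j, rfl⟩ := hd
  calc binaryWeight (a + (j + j)) ≤ binaryWeight a + binaryWeight (2 * j) := by
        rw [two_mul]; exact binaryWeight_add_le _ _
    _ = binaryWeight a + binaryWeight j := by rw [binaryWeight_two_mul]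
    _ < binaryWeight a + (j + j) := by have := binaryWeight_le j; omega

theorem binaryWeight_sum_two_pow {L : List ℕ} (hL : L.SortedLT) :
    binaryWeight (L.map (2 ^ ·)).sum = L.length := by
  rw [binaryWeight_eq_length_bitIndices, Nat.bitIndices_sum_map_two_pow hL]

theorem binaryWeight_multiset_sum_two_pow_le (s : Multiset ℕ) :
    binaryWeight (s.map (2 ^ ·)).sum ≤ Multiset.card s := by
  induction s using Multiset.induction with
  | empty => simp [binaryWeight]
  | cons a s ih =>
    simp only [Multiset.map_cons, Multiset.sum_cons, Multiset.card_cons]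
    have := binaryWeight_add_le (2 ^ a) (s.map (2 ^ ·)).sum
    rw [binaryWeight_two_pow] at this
    omega

theorem IsABP.sum_two_pow {n : ℕ} {P : Multiset ℕ} (hP : IsABP n P) :
    (P.map (2 ^ ·)).sum = n + Multiset.card P := by
  have h2pow (d : ℕ) : 2 ^ d = nu d + 1 := by
    have := Nat.one_le_two_pow (n := d)
    simp only [nu]
    omega
  simp [h2pow, Multiset.sum_map_add, hP.2]

theorem IsABP.even_add_card {n : ℕ} {P : Multiset ℕ} (hP : IsABP n P) :
    Even (n + Multiset.card P) := by
  rw [← hP.sum_two_pow, even_iff_two_dvd]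
  refine Multiset.dvd_sum fun x hx => ?_
  obtain ⟨d, hd, rfl⟩ := Multiset.mem_map.mp hx
  exact dvd_pow_self 2 (by have := hP.1 d hd; omega)

theorem IsABP.binaryWeight_le {n : ℕ} {P : Multiset ℕ} (hP : IsABP n P) :
    binaryWeight (n + Multiset.card P) ≤ Multiset.card P :=
  hP.sum_two_pow ▸ binaryWeight_multiset_sum_two_pow_le P

theorem IsABP.length_le_card {n : ℕ} {l : List ℕ} {P : Multiset ℕ} (hl : l.Pairwise (· > ·))
    (hlABP : IsABP n l) (hP : IsABP n P) : l.length ≤ Multiset.card P := by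
  have hsum : (l.map (2 ^ ·)).sum = n + l.length := by simpa using hlABP.sum_two_pow
  have hweight : binaryWeight (n + l.length) = l.length := by
    have hsorted : l.reverse.SortedLT :=
      List.sortedLT_iff_pairwise.mpr (List.pairwise_reverse.mpr hl)
    simpa [← hsum, List.map_reverse] using binaryWeight_sum_two_pow hsorted
  by_contra! hlt
  have heven : Even (l.length - Multiset.card P) := by
    have hl_even : Even (n + l.length) := by simpa using hlABP.even_add_card
    have hP_even := hP.even_add_card
    rw [Nat.even_iff] at hl_even hP_even ⊢
    omega
  have hdiff : n + l.length = n + Multiset.card P + (l.length - Multiset.card P) := by omega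
  have hgap := binaryWeight_add_lt_of_even (a := n + Multiset.card P) heven (by omega)
  rw [← hdiff, hweight] at hgap
  have := hP.binaryWeight_le
  omega

theorem stmt5 (n : ℕ) (l : List ℕ) (hsort : l.Pairwise (· > ·))
    (hpos : ∀ d ∈ l, 1 ≤ d) (hsum : (l.map nu).sum = n) :
    tauP n = l.length := by
  have hlABP : IsABP n l := ⟨by simpa using hpos, by simpa using hsum⟩
  have hmem : l.length ∈ {k | ∃ P : Multiset ℕ, IsABP n P ∧ P.card = k} := ⟨l, hlABP, by simp⟩
  refine le_antisymm (Nat.sInf_le hmem) (le_csInf ⟨_, hmem⟩ ?_)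
  rintro _ ⟨P, hP, rfl⟩
  exact hlABP.length_le_card hsort hP
end

section
/- Define τ(n) to be the minimum of |P| + |N| over all pairs of finite multisets (P, N) of positive integers with n = Σ_{i∈P}(2^i − 1) − Σ_{j∈N}(2^j − 1). Then τ(n) = τ(f(n)), where f(n) = n if n = 2^k − 1 for some k, and f(n) = 3·2^⌊log₂ n⌋ − n − 2 otherwise. -/
lemma nu_add_one (a : ℕ) : nu a + 1 = 2 ^ a := by
  have := Nat.one_le_two_pow (n := a)
  unfold nu
  omega

lemma nu_succ (a : ℕ) : nu (a + 1) = 2 * nu a + 1 := by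
  have h := nu_add_one (a + 1)
  rw [pow_succ, ← nu_add_one a] at h
  omega

lemma nu_one : nu 1 = 1 := rfl

lemma nu_lt_two_pow_or_two_pow_succ_le (a L : ℕ) : nu a < 2 ^ L ∨ 2 ^ (L + 1) ≤ nu a + 1 := by
  rw [nu_add_one]
  rcases le_or_gt a L with h | h
  · have := Nat.pow_le_pow_right two_pos h
    have := nu_add_one a
    omega
  · exact Or.inr (Nat.pow_le_pow_right two_pos h)

lemma sum_range_nu_add (m : ℕ) : ∑ a ∈ Finset.range m, nu a + m = nu m := by
  induction m with
  | zero => rfl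
  | succ m ih => rw [Finset.sum_range_succ, nu_succ]; omega

lemma sum_map_nu_add_le {S : Multiset ℕ} {m : ℕ} (hS : S.Nodup) (hm : ∀ a ∈ S, a < m) :
    (S.map nu).sum + m ≤ nu m := by
  have hsub : (⟨S, hS⟩ : Finset ℕ) ⊆ Finset.range m := fun a ha => Finset.mem_range.mpr (hm a ha)
  have := Finset.sum_le_sum_of_subset (f := nu) hsub
  rw [← sum_range_nu_add m, ← Finset.sum_map_val]
  exact Nat.add_le_add_right this m

namespace IsSABP

variable {n : ℕ} {P N : Multiset ℕ}

lemma cons_pos {a : ℕ} (h : IsSABP n P N) (ha : 1 ≤ a) : IsSABP (n + nu a) (a ::ₘ P) N := by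
  obtain ⟨hP, hN, he⟩ := h
  refine ⟨Multiset.forall_mem_cons.mpr ⟨ha, hP⟩, hN, ?_⟩
  simp only [Multiset.map_cons, Multiset.sum_cons, Nat.cast_add]
  omega

lemma cons_neg {a : ℕ} (h : IsSABP (n + nu a) P N) (ha : 1 ≤ a) : IsSABP n P (a ::ₘ N) := by
  obtain ⟨hP, hN, he⟩ := h
  refine ⟨hP, Multiset.forall_mem_cons.mpr ⟨ha, hN⟩, ?_⟩
  simp only [Multiset.map_cons, Multiset.sum_cons, Nat.cast_add] at he ⊢
  omega

lemma cancel {a : ℕ} (h : IsSABP n (a ::ₘ P) (a ::ₘ N)) : IsSABP n P N := by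
  obtain ⟨hP, hN, he⟩ := h
  refine ⟨(Multiset.forall_mem_cons.mp hP).2, (Multiset.forall_mem_cons.mp hN).2, ?_⟩
  simp only [Multiset.map_cons, Multiset.sum_cons, Nat.cast_add] at he
  omega

lemma exists_eq_nu_of_card_le_one (h : IsSABP n P N) (hk : P.card + N.card ≤ 1) :
    ∃ a, n = nu a := by
  obtain ⟨-, -, he⟩ := h
  by_cases hP : P = 0
  · refine ⟨0, ?_⟩
    simp only [hP, Multiset.map_zero, Multiset.sum_zero, Nat.cast_zero, zero_sub] at he
    simp only [nu, pow_zero, Nat.sub_self]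
    omega
  · obtain ⟨a, rfl⟩ : ∃ a, P = {a} := Multiset.card_eq_one.mp (by
      have := Multiset.card_pos.mpr hP; omega)
    obtain rfl : N = 0 := Multiset.card_eq_zero.mp (by rw [Multiset.card_singleton] at hk; omega)
    exact ⟨a, by simpa using he⟩

lemma merge_pos {a : ℕ} (h : IsSABP n (a ::ₘ a ::ₘ P) N) : IsSABP (n + 1) ((a + 1) ::ₘ P) N := by
  obtain ⟨hP, hN, he⟩ := h
  simp only [Multiset.forall_mem_cons] at hP
  refine ⟨Multiset.forall_mem_cons.mpr ⟨by omega, hP.2.2⟩, hN, ?_⟩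
  simp only [Multiset.map_cons, Multiset.sum_cons, Nat.cast_add, nu_succ, Nat.cast_mul] at he ⊢
  simp only [Nat.cast_ofNat, Nat.cast_one] at he ⊢
  omega

lemma merge_neg {a : ℕ} (h : IsSABP (n + 1) P (a ::ₘ a ::ₘ N)) : IsSABP n P ((a + 1) ::ₘ N) := by
  obtain ⟨hP, hN, he⟩ := h
  simp only [Multiset.forall_mem_cons] at hN
  refine ⟨hP, Multiset.forall_mem_cons.mpr ⟨by omega, hN.2.2⟩, ?_⟩
  simp only [Multiset.map_cons, Multiset.sum_cons, Nat.cast_add, nu_succ, Nat.cast_mul] at he ⊢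
  simp only [Nat.cast_ofNat, Nat.cast_one] at he ⊢
  omega

lemma borrow {a : ℕ} (h : IsSABP (n + 1) ((a + 1) ::ₘ P) (a ::ₘ N)) : IsSABP n (a ::ₘ P) N := by
  obtain ⟨hP, hN, he⟩ := h
  simp only [Multiset.forall_mem_cons] at hP hN
  refine ⟨Multiset.forall_mem_cons.mpr ⟨hN.1, hP.2⟩, hN.2, ?_⟩
  simp only [Multiset.map_cons, Multiset.sum_cons, Nat.cast_add, nu_succ, Nat.cast_mul] at he ⊢
  simp only [Nat.cast_ofNat, Nat.cast_one] at he ⊢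
  omega

lemma dual {L : ℕ} (hL : 1 ≤ L) (h : IsSABP n P N) (hn : n ≤ nu L + nu (L + 1)) :
    IsSABP (nu L + nu (L + 1) - n) (L ::ₘ (L + 1) ::ₘ N) P := by
  obtain ⟨hP, hN, he⟩ := h
  refine ⟨Multiset.forall_mem_cons.mpr ⟨hL, Multiset.forall_mem_cons.mpr ⟨by omega, hN⟩⟩, hP, ?_⟩
  simp only [Multiset.map_cons, Multiset.sum_cons, Nat.cast_add, Nat.cast_sub hn]
  omega

end IsSABP

lemma tau_le_card {n : ℕ} {P N : Multiset ℕ} (h : IsSABP n P N) : tau n ≤ P.card + N.card :=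
  Nat.sInf_le ⟨P, N, h, rfl⟩

lemma exists_isSABP_card_eq_tau (n : ℕ) :
    ∃ P N : Multiset ℕ, IsSABP n P N ∧ P.card + N.card = tau n := by
  have h : IsSABP n (Multiset.replicate n 1) 0 :=
    ⟨fun i hi => (Multiset.eq_of_mem_replicate hi).ge, by simp, by simp [nu_one]⟩
  exact Nat.sInf_mem (s := {k | ∃ P N, IsSABP n P N ∧ P.card + N.card = k}) ⟨_, _, _, h, rfl⟩

lemma tau_le_tau_add_one {m n : ℕ} (h₁ : m ≤ n + 1) (h₂ : n ≤ m + 1) : tau m ≤ tau n + 1 := by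
  obtain ⟨P, N, h, hk⟩ := exists_isSABP_card_eq_tau n
  rcases (by omega : m = n ∨ m = n + 1 ∨ n = m + 1) with rfl | rfl | rfl
  · omega
  · have := tau_le_card (h.cons_pos (a := 1) le_rfl)
    simp only [nu_one, Multiset.card_cons] at this
    omega
  · have := tau_le_card (h.cons_neg (a := 1) le_rfl)
    simp only [Multiset.card_cons] at this
    omega

lemma IsSABP.exists_succ_mem_and_mem {L n : ℕ} {P N : Multiset ℕ} (h : IsSABP n P N)
    (hP : P.Nodup) (hN : N.Nodup) (hPN : ∀ a ∈ P, a ∉ N) (hLP : L ∉ P) (hL1P : L + 1 ∉ P)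
    (hn : 2 ^ L ≤ n) (hn' : n + 2 ≤ 2 ^ (L + 1)) : ∃ a, a + 1 ∈ P ∧ a ∈ N := by
  obtain ⟨-, -, he⟩ := h
  have hnuL := nu_add_one L
  have hne : P + N ≠ 0 := by
    rintro h0
    obtain ⟨rfl, rfl⟩ := add_eq_zero.mp h0
    simp only [Multiset.map_zero, Multiset.sum_zero, Nat.cast_zero, sub_zero] at he
    omega
  obtain ⟨M, hM, hmax⟩ := Multiset.exists_max_image id hne
  have hmaxP : ∀ a ∈ P, a ≤ M := fun a ha => hmax a (Multiset.mem_add.mpr (Or.inl ha))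
  have hmaxN : ∀ a ∈ N, a ≤ M := fun a ha => hmax a (Multiset.mem_add.mpr (Or.inr ha))
  rcases Multiset.mem_add.mp hM with hMP | hMN
  · have hPM := Multiset.le_sum_of_mem (Multiset.mem_map_of_mem nu hMP)
    rcases (by grind : M < L ∨ L + 1 < M) with hML | hLM
    · have := sum_map_nu_add_le hP fun a ha => (hmaxP a ha).trans_lt hML
      omega
    · obtain ⟨a, rfl⟩ : ∃ a, M = a + 1 := ⟨M - 1, by omega⟩
      refine ⟨a, hMP, ?_⟩
      by_contra haN
      have hNa := sum_map_nu_add_le (m := a) hN fun b hb => by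
        have : b ≠ a + 1 := by rintro rfl; exact hPN _ hMP hb
        have : b ≠ a := by rintro rfl; exact haN hb
        have := hmaxN b hb
        omega
      have hpow : 2 ^ (L + 1) ≤ 2 ^ a := Nat.pow_le_pow_right two_pos (by omega)
      have := nu_add_one a
      rw [nu_succ] at hPM
      omega
  · have hPM := sum_map_nu_add_le hP fun a ha =>
      lt_of_le_of_ne (hmaxP a ha) fun h => hPN _ ha (h ▸ hMN)
    have hNM := Multiset.le_sum_of_mem (Multiset.mem_map_of_mem nu hMN)
    have := Nat.one_le_two_pow (n := L)
    omega

lemma IsSABP.exists_shorter_of_notMem {L n : ℕ} {P N : Multiset ℕ} (h : IsSABP n P N)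
    (hLP : L ∉ P) (hL1P : L + 1 ∉ P) (hn : 2 ^ L ≤ n) (hn' : n + 2 ≤ 2 ^ (L + 1)) :
    ∃ m P' N', m ≤ n + 1 ∧ n ≤ m + 1 ∧ IsSABP m P' N' ∧
      P'.card + N'.card < P.card + N.card := by
  have hn1 : 1 ≤ n := le_trans Nat.one_le_two_pow hn
  by_cases hPN : ∃ a ∈ P, a ∈ N
  · obtain ⟨a, haP, haN⟩ := hPN
    obtain ⟨P', rfl⟩ := Multiset.exists_cons_of_mem haP
    obtain ⟨N', rfl⟩ := Multiset.exists_cons_of_mem haN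
    exact ⟨n, P', N', by omega, by omega, h.cancel, by simp; omega⟩
  push Not at hPN
  by_cases hP : P.Nodup
  swap
  · obtain ⟨a, P', rfl⟩ : ∃ a P', P = a ::ₘ a ::ₘ P' := by
      simpa [Multiset.nodup_iff_ne_cons_cons] using hP
    exact ⟨n + 1, _, N, by omega, by omega, h.merge_pos, by simp⟩
  obtain ⟨n, rfl⟩ : ∃ n', n = n' + 1 := ⟨n - 1, by omega⟩
  by_cases hN : N.Nodup
  swap
  · obtain ⟨a, N', rfl⟩ : ∃ a N', N = a ::ₘ a ::ₘ N' := by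
      simpa [Multiset.nodup_iff_ne_cons_cons] using hN
    exact ⟨n, P, _, by omega, by omega, h.merge_neg, by simp⟩
  obtain ⟨a, haP, haN⟩ := h.exists_succ_mem_and_mem hP hN hPN hLP hL1P hn hn'
  obtain ⟨P', rfl⟩ := Multiset.exists_cons_of_mem haP
  obtain ⟨N', rfl⟩ := Multiset.exists_cons_of_mem haN
  exact ⟨n, a ::ₘ P', N', by omega, by omega, h.borrow, by simp⟩

theorem IsSABP.tau_dual_le_card {L n : ℕ} {P N : Multiset ℕ} (hL : 1 ≤ L) (h : IsSABP n P N)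
    (hn : 2 ^ L ≤ n) (hn' : n + 2 ≤ 2 ^ (L + 1)) :
    tau (nu L + nu (L + 1) - n) ≤ P.card + N.card := by
  induction hk : P.card + N.card using Nat.strong_induction_on generalizing n P N with
  | _ k ih =>
  have hnuL := nu_add_one L
  have hnuL1 := nu_succ L
  by_cases hbd : n = 2 ^ L ∨ n + 2 = 2 ^ (L + 1)
  · have hk2 : 2 ≤ k := by
      by_contra hk1
      obtain ⟨a, rfl⟩ := h.exists_eq_nu_of_card_le_one (by omega)
      have := nu_lt_two_pow_or_two_pow_succ_le a L
      omega
    have hg : IsSABP (nu L + nu (L + 1) - n) {L + 1} {if n = 2 ^ L then 1 else L} := by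
      refine ⟨by simp, by split_ifs <;> simp [hL], ?_⟩
      split_ifs <;> simp only [Multiset.map_singleton, Multiset.sum_singleton, nu_one] <;> omega
    simpa using (tau_le_card hg).trans hk2
  have hg : n ≤ nu L + nu (L + 1) := by omega
  by_cases hLP : L ∈ P
  · obtain ⟨P', rfl⟩ := Multiset.exists_cons_of_mem hLP
    have := tau_le_card (h.dual hL hg).cancel
    simp only [Multiset.card_cons] at this hk
    omega
  by_cases hL1P : L + 1 ∈ P
  · obtain ⟨P', rfl⟩ := Multiset.exists_cons_of_mem hL1P
    have := h.dual hL hg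
    rw [Multiset.cons_swap] at this
    have := tau_le_card this.cancel
    simp only [Multiset.card_cons] at this hk
    omega
  obtain ⟨m, P', N', hm₁, hm₂, h', hk'⟩ := h.exists_shorter_of_notMem hLP hL1P hn hn'
  calc tau (nu L + nu (L + 1) - n) ≤ tau (nu L + nu (L + 1) - m) + 1 :=
        tau_le_tau_add_one (by omega) (by omega)
    _ ≤ P'.card + N'.card + 1 := by
        gcongr
        exact ih _ (hk ▸ hk') h' (by omega) (by omega) rfl
    _ ≤ k := by omega

theorem tau_dual_eq {L n : ℕ} (hL : 1 ≤ L) (hn : 2 ^ L ≤ n) (hn' : n + 2 ≤ 2 ^ (L + 1)) :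
    tau (nu L + nu (L + 1) - n) = tau n := by
  have hnuL := nu_add_one L
  have hnuL1 := nu_succ L
  have hdual : nu L + nu (L + 1) - (nu L + nu (L + 1) - n) = n := by omega
  obtain ⟨P, N, h, hk⟩ := exists_isSABP_card_eq_tau n
  obtain ⟨P', N', h', hk'⟩ := exists_isSABP_card_eq_tau (nu L + nu (L + 1) - n)
  have := h'.tau_dual_le_card hL (by omega) (by omega)
  rw [hdual] at this
  exact le_antisymm (hk ▸ h.tau_dual_le_card hL hn hn') (hk' ▸ this)

theorem stmt7 (n : ℕ) (hn : 1 ≤ n) : tau n = tau (dualf n) := by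
  by_cases hc : ∃ k : ℕ, 1 ≤ k ∧ n = 2 ^ k - 1
  · rw [dualf, if_pos hc]
  rw [dualf, if_neg hc]
  set L := Nat.log 2 n
  have hL : 1 ≤ L := Nat.log_pos one_lt_two (by
    by_contra h1
    exact hc ⟨1, le_rfl, by omega⟩)
  have hlow : 2 ^ L ≤ n := Nat.pow_log_le_self 2 (by omega)
  have hhigh : n + 2 ≤ 2 ^ (L + 1) := by
    have : n < 2 ^ (L + 1) := Nat.lt_pow_succ_log_self one_lt_two n
    have : n ≠ 2 ^ (L + 1) - 1 := fun h => hc ⟨L + 1, by omega, h⟩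
    omega
  have hdual : 3 * 2 ^ L - n - 2 = nu L + nu (L + 1) - n := by
    have := nu_add_one L
    have := nu_succ L
    omega
  rw [hdual, tau_dual_eq hL hlow hhigh]
end

section
/- Suppose (P, N) is a signed almost binary partition of n satisfying: P ∩ N = ∅, P and N are the greedy partitions of their sums, and max(P) = ⌊log₂ n⌋ + 1 + c for some c > 0. Then ⌊log₂ n⌋ + c ∈ N. -/
/-!
The largest parts of `P` and `N` are the leading greedy parts `log₂(A + 1)` and `log₂(B + 1)`
of their sums `A = n + B` and `B`. Since `2 ^ m - 1 ≤ A < 2 ^ (m + 1) - 1` and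
`n < 2 ^ (m - 1)`, the sum `B` lies in `[2 ^ (m - 1), 2 ^ (m + 1) - 1)`, so its leading part is
`m - 1` or `m`; disjointness from `P ∋ m` rules out `m`.
-/

lemma log_succ_mem_greedy {s : ℕ} (hs : 0 < s) : Nat.log 2 (s + 1) ∈ greedy s := by
  obtain ⟨t, rfl⟩ := Nat.exists_eq_succ_of_ne_zero hs.ne'
  rw [greedy]
  exact Multiset.mem_cons_self _ _

lemma succ_lt_two_pow_of_forall_mem_greedy_le {s m : ℕ} (hs : 0 < s)
    (h : ∀ i ∈ greedy s, i ≤ m) : s + 1 < 2 ^ (m + 1) :=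
  calc s + 1 < 2 ^ (Nat.log 2 (s + 1) + 1) := Nat.lt_pow_succ_log_self one_lt_two _
    _ ≤ 2 ^ (m + 1) :=
      Nat.pow_le_pow_right two_pos (Nat.succ_le_succ (h _ (log_succ_mem_greedy hs)))

lemma nu_le_sum_map_nu {P : Multiset ℕ} {m : ℕ} (hm : m ∈ P) : nu m ≤ (P.map nu).sum :=
  Multiset.le_sum_of_mem (Multiset.mem_map_of_mem nu hm)

theorem stmt10_general (n : ℕ) (P N : Multiset ℕ) (c : ℕ) (hc : 0 < c)
    (hsabp : IsSABP n P N) (hdisj : ∀ i, i ∈ P → i ∉ N)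
    (hP : P = greedy ((P.map nu).sum)) (hN : N = greedy ((N.map nu).sum))
    (m : ℕ) (hm : m ∈ P) (hmax : ∀ i ∈ P, i ≤ m)
    (hval : m = Nat.log 2 n + 1 + c) :
    Nat.log 2 n + c ∈ N := by
  set A := (P.map nu).sum
  set B := (N.map nu).sum
  have hAB : A = n + B := by have := hsabp.2.2; omega
  have hnuA : 2 ^ m - 1 ≤ A := nu_le_sum_map_nu hm
  have hpow_pred_pos : 1 ≤ 2 ^ (m - 1) := Nat.one_le_two_pow
  have hpow_m : 2 ^ m = 2 * 2 ^ (m - 1) := by rw [← pow_succ']; congr 1; omega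
  have hA_lt : A + 1 < 2 ^ (m + 1) :=
    succ_lt_two_pow_of_forall_mem_greedy_le (by omega) (hP ▸ hmax)
  have hn_lt : n < 2 ^ (m - 1) :=
    (Nat.lt_pow_succ_log_self one_lt_two n).trans_le (Nat.pow_le_pow_right two_pos (by omega))
  have hB_pos : 0 < B := by omega
  have hlead : Nat.log 2 (B + 1) ∈ N := hN ▸ log_succ_mem_greedy hB_pos
  have hlead_ge : m - 1 ≤ Nat.log 2 (B + 1) :=
    Nat.le_log_of_pow_le one_lt_two (by omega)
  have hlead_le : Nat.log 2 (B + 1) ≤ m :=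
    Nat.lt_succ_iff.mp (Nat.log_lt_of_lt_pow (by omega) (by rw [pow_succ]; omega))
  have hlead_ne : Nat.log 2 (B + 1) ≠ m := fun h => hdisj m hm (h ▸ hlead)
  rwa [show Nat.log 2 (B + 1) = Nat.log 2 n + c by omega] at hlead

theorem stmt10 (n : ℕ) (hn : 1 ≤ n) (P N : Multiset ℕ) (c : ℕ) (hc : 0 < c)
    (hsabp : IsSABP n P N) (hdisj : ∀ i, i ∈ P → i ∉ N)
    (hP : P = greedy ((P.map nu).sum)) (hN : N = greedy ((N.map nu).sum))
    (m : ℕ) (hm : m ∈ P) (hmax : ∀ i ∈ P, i ≤ m)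
    (hval : m = Nat.log 2 n + 1 + c) :
    Nat.log 2 n + c ∈ N :=
  stmt10_general n P N c hc hsabp hdisj hP hN m hm hmax hval
end

section
/- Let S be a finite set of n vertices of 𝒯_∞ such that the complement is connected; equivalently, S is a disjoint union of c complete binary subtrees each with all leaves at the bottom level of 𝒯_∞. Then |(S, S̄)| = c and L(S) = (n + c)/2, where L(S) is the number of bottom-level leaves in S. -/
/-! A vertex lies in the complete subtree rooted at `u` whenever its parent does, and its parent
lies there unless the vertex is `u` itself. So in a disjoint union of such subtrees the only edges
leaving the union are those from the `c` roots to their parents. Counting layer by layer, the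
subtree rooted at `(h, j)` has `2 ^ h` leaves and `2 ^ (h + 1) - 1` vertices, so twice its leaf
count is its size plus one; summing over the roots gives `2 L(S) = n + c`. -/

theorem Nat.div_eq_iff_mem_Ico {i j k : ℕ} (hk : 0 < k) :
    i / k = j ↔ i ∈ Finset.Ico (j * k) ((j + 1) * k) := by
  rw [Finset.mem_Ico, le_antisymm_iff, ← Nat.lt_succ_iff, Nat.div_lt_iff_lt_mul hk,
    Nat.le_div_iff_mul_le hk, and_comm]

namespace completeSubtree

theorem mem_iff {h j a i : ℕ} :
    (a, i) ∈ completeSubtree (h, j) ↔ a ≤ h ∧ i / 2 ^ (h - a) = j := by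
  simp only [completeSubtree, Finset.mem_biUnion, Finset.mem_range, Finset.mem_image,
    Prod.mk.injEq, Nat.div_eq_iff_mem_Ico (Nat.two_pow_pos _)]
  constructor
  · rintro ⟨b, hb, x, hx, rfl, rfl⟩
    exact ⟨by omega, hx⟩
  · rintro ⟨hah, hij⟩
    exact ⟨a, by omega, i, hij, rfl, rfl⟩

theorem self_mem (v : ℕ × ℕ) : v ∈ completeSubtree v := by
  obtain ⟨h, j⟩ := v
  simp [mem_iff]

theorem parentT_mem_iff {u v : ℕ × ℕ} :
    parentT v ∈ completeSubtree u ↔ v ∈ completeSubtree u ∧ v ≠ u := by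
  obtain ⟨a, i⟩ := v
  obtain ⟨h, j⟩ := u
  simp only [parentT, mem_iff, Nat.div_div_eq_div_mul, ne_eq, Prod.mk.injEq]
  rcases Nat.lt_or_ge a h with hah | hha
  · have hpow : 2 * 2 ^ (h - (a + 1)) = 2 ^ (h - a) := by
      rw [← pow_succ']; congr 1; omega
    rw [hpow]
    omega
  · constructor
    · omega
    · rintro ⟨⟨hah, hij⟩, hne⟩
      obtain rfl : a = h := by omega
      simp_all

theorem card (v : ℕ × ℕ) : (completeSubtree v).card = 2 ^ (v.1 + 1) - 1 := by
  obtain ⟨h, j⟩ := v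
  rw [completeSubtree, Finset.card_biUnion]
  · have hlayer : ∀ a ∈ Finset.range (h + 1),
        ((Finset.Ico (j * 2 ^ (h - a)) ((j + 1) * 2 ^ (h - a))).image (a, ·)).card =
          2 ^ (h - a) := by
      intro a _
      rw [Finset.card_image_of_injective _ (Prod.mk_right_injective a), Nat.card_Ico, add_mul,
        one_mul, Nat.add_sub_cancel_left]
    have hreflect := Finset.sum_range_reflect (2 ^ ·) (h + 1)
    simp only [Nat.add_sub_cancel] at hreflect
    rw [Finset.sum_congr rfl hlayer, hreflect, Nat.geomSum_eq le_rfl]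
    simp
  · intro a _ b _ hab
    simp only [Function.onFun, Finset.disjoint_left, Finset.mem_image]
    rintro _ ⟨x, _, rfl⟩ ⟨y, _, hy⟩
    exact hab (Prod.mk.inj hy).1.symm

theorem leafCount_eq (v : ℕ × ℕ) : leafCount (completeSubtree v) = 2 ^ v.1 := by
  obtain ⟨h, j⟩ := v
  have hleaves : (completeSubtree (h, j)).filter (·.1 = 0) =
      (Finset.Ico (j * 2 ^ h) ((j + 1) * 2 ^ h)).image (0, ·) := by
    ext ⟨a, i⟩
    simp only [Finset.mem_filter, mem_iff, Finset.mem_image, Prod.mk.injEq,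
      Nat.div_eq_iff_mem_Ico (Nat.two_pow_pos _)]
    constructor
    · rintro ⟨⟨-, hij⟩, rfl⟩
      exact ⟨i, hij, rfl, rfl⟩
    · rintro ⟨x, hx, rfl, rfl⟩
      exact ⟨⟨Nat.zero_le _, hx⟩, rfl⟩
  rw [leafCount, hleaves, Finset.card_image_of_injective _ (Prod.mk_right_injective 0),
    Nat.card_Ico, add_mul, one_mul, Nat.add_sub_cancel_left]

end completeSubtree

theorem leafCount_biUnion {ι : Type*} (R : Finset ι) (t : ι → Finset (ℕ × ℕ))
    (hdisj : (R : Set ι).PairwiseDisjoint t) :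
    leafCount (R.biUnion t) = ∑ u ∈ R, leafCount (t u) := by
  rw [leafCount, Finset.filter_biUnion, Finset.card_biUnion]
  · rfl
  · exact fun x hx y hy hxy => Finset.disjoint_filter_filter (hdisj hx hy hxy)

section disjointSubtrees

variable {R : Finset (ℕ × ℕ)}
  (hdisj : ∀ u ∈ R, ∀ v ∈ R, u ≠ v → Disjoint (completeSubtree u) (completeSubtree v))
include hdisj

theorem cutSet_biUnion_completeSubtree :
    {v : ℕ × ℕ | ¬(v ∈ R.biUnion completeSubtree ↔ parentT v ∈ R.biUnion completeSubtree)} =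
      R := by
  ext v
  simp only [Set.mem_ofPred_eq, Finset.mem_coe, Finset.mem_biUnion,
    completeSubtree.parentT_mem_iff]
  constructor
  · intro hcut
    by_contra hvR
    refine hcut ⟨fun ⟨u, hu, hvu⟩ => ⟨u, hu, hvu, ?_⟩, fun ⟨u, hu, hvu, _⟩ => ⟨u, hu, hvu⟩⟩
    rintro rfl
    exact hvR hu
  · rintro hvR hiff
    obtain ⟨u, hu, hvu, hne⟩ := hiff.1 ⟨v, hvR, completeSubtree.self_mem v⟩
    exact Finset.disjoint_left.1 (hdisj v hvR u hu hne) (completeSubtree.self_mem v) hvu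

theorem cutCard_biUnion_completeSubtree : cutCard (R.biUnion completeSubtree) = R.card := by
  rw [cutCard, cutSet_biUnion_completeSubtree hdisj, Set.ncard_coe_finset]

theorem two_mul_leafCount_biUnion_completeSubtree :
    2 * leafCount (R.biUnion completeSubtree) = (R.biUnion completeSubtree).card + R.card := by
  rw [leafCount_biUnion R _ hdisj, Finset.card_biUnion hdisj, Finset.mul_sum,
    Finset.card_eq_sum_ones R, ← Finset.sum_add_distrib]
  refine Finset.sum_congr rfl fun u _ => ?_
  rw [completeSubtree.leafCount_eq, completeSubtree.card, pow_succ]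
  have : 1 ≤ 2 ^ u.1 := Nat.one_le_two_pow
  omega

end disjointSubtrees

theorem stmt15 (S R : Finset (ℕ × ℕ)) (n c : ℕ)
    (hS : S = R.biUnion completeSubtree)
    (hdisj : ∀ u ∈ R, ∀ v ∈ R, u ≠ v → Disjoint (completeSubtree u) (completeSubtree v))
    (hn : S.card = n) (hc : R.card = c) :
    cutCard S = c ∧ 2 * leafCount S = n + c := by
  subst hS hn hc
  exact ⟨cutCard_biUnion_completeSubtree hdisj, two_mul_leafCount_biUnion_completeSubtree hdisj⟩
end

section
/- For any finite subset S of the vertices of 𝒯_∞ with |S| = n, define f_S(v) = 2^{ℓ(v)} − 1 if v ∈ S and parent(v) ∉ S; f_S(v) = −(2^{ℓ(v)} − 1) if v ∉ S and parent(v) ∈ S; and f_S(v) = 0 otherwise, where ℓ(v) is the level of v (leaves at level 1). Then n = Σ_v f_S(v), and the number of cut edges |(S, S̄)| equals the number of vertices v with f_S(v) ≠ 0. Moreover if S is connected then exactly one term f_S(v) is positive. -/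
/-
Writing `w v = 2 ^ levelT v - 1`, we have `fS S v = ([v ∈ S] - [parentT v ∈ S]) * w v`, which is
additive in `S`. For a single vertex `u`, the function `fS {u}` is `w u` at `u` and `-w c` at its
children `c`, which sums to `1` since `w u = 2 * w c + 1`; summing over `u ∈ S` gives `|S|`.
For connected `S`, a vertex of `S` whose parent lies outside `S` is an ancestor of every vertex of
`S`, hence equals any vertex of `S` of maximal level; such a vertex does have its parent outside `S`.
-/

lemma fS_eq (S : Finset (ℕ × ℕ)) (v : ℕ × ℕ) :
    fS S v = ((if v ∈ S then 1 else 0) - (if parentT v ∈ S then 1 else 0)) * (2 ^ levelT v - 1) := by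
  unfold fS
  split_ifs <;> simp_all

lemma fS_eq_sum_fS_singleton (S : Finset (ℕ × ℕ)) (v : ℕ × ℕ) :
    fS S v = ∑ u ∈ S, fS {u} v := by
  simp only [fS_eq, Finset.mem_singleton, ← Finset.sum_mul, Finset.sum_sub_distrib,
    Finset.sum_ite_eq]

lemma support_fS_singleton_subset (u : ℕ × ℕ) :
    Function.support (fS {u}) ⊆ ↑({u, (u.1 - 1, 2 * u.2), (u.1 - 1, 2 * u.2 + 1)} : Finset _) := by
  intro v hv
  have : v = u ∨ parentT v = u := by
    by_contra! h
    simp [fS, h.1, h.2] at hv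
  simp only [parentT, Prod.ext_iff] at this
  simp only [Finset.coe_insert, Finset.coe_singleton, Set.mem_insert_iff, Set.mem_singleton_iff,
    Prod.ext_iff]
  omega

lemma finsum_fS_singleton (u : ℕ × ℕ) : ∑ᶠ v, fS {u} v = 1 := by
  rw [finsum_eq_finsetSum_of_support_subset _ (support_fS_singleton_subset u)]
  obtain ⟨_ | k, i⟩ := u
  · rcases Nat.eq_zero_or_pos i with rfl | hi
    · simp [fS, parentT, levelT]
    · rw [Finset.sum_insert (by simp; omega), Finset.sum_pair (by simp)]
      simp [fS, parentT, levelT]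
      omega
  · rw [Finset.sum_insert (by simp), Finset.sum_pair (by simp)]
    simp [fS, parentT, levelT, pow_succ]
    omega

theorem finsum_fS (S : Finset (ℕ × ℕ)) : ∑ᶠ v, fS S v = S.card := by
  simp_rw [fS_eq_sum_fS_singleton S]
  rw [finsum_sum_comm _ _ fun u _ => (Finset.finite_toSet _).subset (support_fS_singleton_subset u)]
  simp [finsum_fS_singleton]

lemma one_lt_two_pow_levelT (v : ℕ × ℕ) : (1 : ℤ) < 2 ^ levelT v :=
  one_lt_pow₀ one_lt_two (Nat.succ_ne_zero _)

lemma fS_pos_iff (S : Finset (ℕ × ℕ)) (v : ℕ × ℕ) : 0 < fS S v ↔ v ∈ S ∧ parentT v ∉ S := by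
  have := one_lt_two_pow_levelT v
  by_cases v ∈ S <;> by_cases parentT v ∈ S <;> simp [fS, *]; omega

lemma fS_ne_zero_iff (S : Finset (ℕ × ℕ)) (v : ℕ × ℕ) : fS S v ≠ 0 ↔ ¬(v ∈ S ↔ parentT v ∈ S) := by
  have := one_lt_two_pow_levelT v
  by_cases v ∈ S <;> by_cases parentT v ∈ S <;> simp [fS, *] <;> omega

lemma iterate_parentT_fst (k : ℕ) (u : ℕ × ℕ) : (parentT^[k] u).1 = u.1 + k := by
  induction k generalizing u with
  | zero => rfl
  | succ k ih => rw [Function.iterate_succ_apply, ih]; simp only [parentT]; omega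

lemma exists_iterate_parentT_eq_of_reachable {S : Set (ℕ × ℕ)} {v : ℕ × ℕ} (hv : parentT v ∉ S)
    {a b : S} (hab : (treeGraph.induce S).Reachable a b) (ha : ∃ k, parentT^[k] a = v) :
    ∃ k, parentT^[k] b = v := by
  obtain ⟨p⟩ := hab
  induction p with
  | nil => exact ha
  | @cons a x b hax _ ih =>
    apply ih
    obtain ⟨k, hk⟩ := ha
    obtain hax | hxa : parentT a = x ∨ parentT x = a := hax
    · cases k with
      | zero => exact absurd (hk ▸ hax ▸ x.2) hv
      | succ k => exact ⟨k, by rwa [Function.iterate_succ_apply, hax] at hk⟩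
    · exact ⟨k + 1, by rw [Function.iterate_succ_apply, hxa, hk]⟩

theorem existsUnique_fS_pos_of_connected (S : Finset (ℕ × ℕ))
    (hS : (treeGraph.induce (↑S : Set (ℕ × ℕ))).Connected) : ∃! v, 0 < fS S v := by
  obtain ⟨⟨w, hw⟩⟩ := hS.nonempty
  obtain ⟨top, htop, hmax⟩ := S.exists_max_image Prod.fst ⟨w, hw⟩
  have hparent : parentT top ∉ S := fun h => by simpa [parentT] using hmax _ h
  refine ⟨top, (fS_pos_iff S top).2 ⟨htop, hparent⟩, fun u hu => ?_⟩
  obtain ⟨hu, hparent_u⟩ := (fS_pos_iff S u).1 hu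
  obtain ⟨k, hk⟩ := exists_iterate_parentT_eq_of_reachable (a := ⟨u, hu⟩) (b := ⟨top, htop⟩)
    hparent_u (hS.preconnected _ _) ⟨0, rfl⟩
  have hk0 : k = 0 := by
    have := hmax u hu
    rw [← hk, iterate_parentT_fst] at this
    simp only at this
    omega
  rw [← hk, hk0, Function.iterate_zero_apply]

theorem stmt16 (S : Finset (ℕ × ℕ)) :
    (∑ᶠ v : ℕ × ℕ, fS S v) = (S.card : ℤ) ∧
    cutCard S = Set.ncard {v : ℕ × ℕ | fS S v ≠ 0} ∧
    ((treeGraph.induce (↑S : Set (ℕ × ℕ))).Connected → ∃! v : ℕ × ℕ, 0 < fS S v) := by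
  refine ⟨finsum_fS S, ?_, existsUnique_fS_pos_of_connected S⟩
  simp only [cutCard, fS_ne_zero_iff]
end
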